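/- Let C be a minimal set cover of a finite set V that is unbalanced, i.e., C contains a set Y with |Y| = |V| − |C| + 1. Then every element of V not in Y belongs to exactly one set of C − {Y}, and every set of C other than Y consists of exactly one element of V − Y together with a (possibly empty) subset of Y. -/
import Mathlib


/-- `C` is a set cover of the finite type `V`: the union of its members is all of `V`. -/
def IsSetCover {V : Type*} [Fintype V] (C : Finset (Finset V)) : Prop :=
  ∀ v : V, ∃ A ∈ C, v ∈ A

/-- A set cover is minimal if no member is contained in the union of the remaining members. -/
def IsMinimalCover {V : Type*} [DecidableEq V] (C : Finset (Finset V)) : Prop :=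
  ∀ A ∈ C, ¬ A ⊆ (C.erase A).sup id

/-- A vertex is loyal if it belongs to exactly one member of `C`. -/
def Loyal {V : Type*} (C : Finset (Finset V)) (v : V) : Prop :=
  ∃! A : Finset V, A ∈ C ∧ v ∈ A

/-- If a minimal set cover `C` of `V` is unbalanced, i.e. contains a member `Y` with
|Y| = |V| − |C| + 1, then every element outside `Y` lies in exactly one member of
`C − {Y}`, and every member other than `Y` has exactly one element outside `Y`
(the rest being a subset of `Y`). -/
theorem unbalanced_cover_structure {V : Type*} [Fintype V] [DecidableEq V]
    (C : Finset (Finset V)) (hC : IsSetCover C) (hm : IsMinimalCover C)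
    (Y : Finset V) (hY : Y ∈ C)
    (hcard : (Y.card : ℤ) = (Fintype.card V : ℤ) - C.card + 1) :
    (∀ v : V, v ∉ Y → ∃! A : Finset V, A ∈ C.erase Y ∧ v ∈ A) ∧
    (∀ A ∈ C, A ≠ Y → ∃ v : V, A \ Y = {v}) := by

  classical
  -- every member has a private element
  have hpriv : ∀ A ∈ C, ∃ v, v ∈ A ∧ ∀ B ∈ C, B ≠ A → v ∉ B := by
    intro A hA
    obtain ⟨v, hvA, hv⟩ := Finset.not_subset.mp (hm A hA)
    refine ⟨v, hvA, fun B hB hBA hvB => hv ?_⟩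
    exact Finset.le_sup (f := id) (Finset.mem_erase.mpr ⟨hBA, hB⟩) hvB
  choose f hf1 hf2 using hpriv
  set s := C.erase Y with hs
  set t := (Finset.univ : Finset V) \ Y with ht
  have hmapsto : ∀ A (hA : A ∈ s), f A (Finset.mem_of_mem_erase hA) ∈ t := by
    intro A hA
    have hAne : A ≠ Y := (Finset.mem_erase.mp hA).1
    refine Finset.mem_sdiff.mpr ⟨Finset.mem_univ _, ?_⟩
    exact hf2 A (Finset.mem_of_mem_erase hA) Y hY (Ne.symm hAne)
  have hinj : ∀ A₁ A₂ (h₁ : A₁ ∈ s) (h₂ : A₂ ∈ s),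
      f A₁ (Finset.mem_of_mem_erase h₁) = f A₂ (Finset.mem_of_mem_erase h₂) → A₁ = A₂ := by
    intro A₁ A₂ h₁ h₂ heq
    by_contra hne
    have h1 := hf1 A₁ (Finset.mem_of_mem_erase h₁)
    have h2 := hf2 A₂ (Finset.mem_of_mem_erase h₂) A₁ (Finset.mem_of_mem_erase h₁) hne
    rw [heq] at h1
    exact h2 h1
  have hle : t.card ≤ s.card := by
    have h1 : t.card = Fintype.card V - Y.card := by
      rw [ht, Finset.card_sdiff_of_subset (Finset.subset_univ Y), Finset.card_univ]
    have h2 : s.card = C.card - 1 := Finset.card_erase_of_mem hY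
    have h3 : Y.card ≤ Fintype.card V := Finset.card_le_univ Y
    have h4 : 1 ≤ C.card := Finset.card_pos.mpr ⟨Y, hY⟩
    omega
  have hsurj := Finset.surj_on_of_inj_on_of_card_le
    (fun A hA => f A (Finset.mem_of_mem_erase hA)) hmapsto hinj hle
  -- key: every v outside Y belongs only to the member it is private to
  have key : ∀ v : V, v ∉ Y → ∃ A, ∃ hA : A ∈ s,
      v = f A (Finset.mem_of_mem_erase hA) := by
    intro v hv
    exact hsurj v (Finset.mem_sdiff.mpr ⟨Finset.mem_univ _, hv⟩)
  constructor
  · intro v hv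
    obtain ⟨A, hA, hvA⟩ := key v hv
    refine ⟨A, ⟨hA, hvA ▸ hf1 A (Finset.mem_of_mem_erase hA)⟩, ?_⟩
    rintro B ⟨hB, hvB⟩
    by_contra hne
    have := hf2 A (Finset.mem_of_mem_erase hA) B (Finset.mem_of_mem_erase hB) hne
    rw [hvA] at hvB
    exact this hvB
  · intro A hA hAY
    have hAs : A ∈ s := Finset.mem_erase.mpr ⟨hAY, hA⟩
    refine ⟨f A hA, Finset.eq_singleton_iff_unique_mem.mpr ⟨?_, ?_⟩⟩
    · refine Finset.mem_sdiff.mpr ⟨hf1 A hA, ?_⟩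
      exact hf2 A hA Y hY (Ne.symm hAY)
    · intro x hx
      obtain ⟨hxA, hxY⟩ := Finset.mem_sdiff.mp hx
      obtain ⟨B, hB, hxB⟩ := key x hxY
      have hBA : B = A := by
        by_contra hne
        exact hf2 B (Finset.mem_of_mem_erase hB) A hA (Ne.symm hne) (hxB ▸ hxA)
      subst hBA
      exact hxB
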